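/- Let W ∈ ℂ^{m+1} be nonzero and r ∈ (0, π/2). The function ψ̄_{r,W} satisfies 0 ≤ ψ̄_{r,W}(Z) ≤ 1/3 for every nonzero Z ∈ ℂ^{m+1}, and ψ̄_{r,W}(Z) = 0 whenever φ_W(Z) > cos²(r/2); i.e. ψ̄_{r,W} is a nonnegative function bounded by 1/3 that is supported in the complement of the Fubini–Study ball B_{[W]}(r/2). -/

import Mathlib

open Real

/-- `phiW W Z = |⟨Z,W⟩|² / (|Z|²|W|²)`, the squared cosine of the Fubini–Study distance
between the lines `[Z]` and `[W]` in `ℂP^m`.  Here `inner W Z` is the Hermitian product,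
linear in `Z`. -/
noncomputable def phiW {m : ℕ} (W Z : EuclideanSpace ℂ (Fin (m + 1))) : ℝ :=
  ‖(inner ℂ W Z : ℂ)‖ ^ 2 / (‖Z‖ ^ 2 * ‖W‖ ^ 2)

/-- `ThetaW t W` is the ℂ-linear map `Z ↦ tZ + (1-t)(⟨Z,W⟩/|W|²)W`, i.e. the identity on
the line `ℂW` and multiplication by `t` on its orthogonal complement. -/
noncomputable def ThetaW {m : ℕ} (t : ℝ) (W Z : EuclideanSpace ℂ (Fin (m + 1))) :
    EuclideanSpace ℂ (Fin (m + 1)) :=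
  (t : ℂ) • Z + (((1 : ℂ) - (t : ℂ)) * ((inner ℂ W Z : ℂ) / ((‖W‖ : ℂ) ^ 2))) • W

/-- The cut-off function `ψ̄_{r,W}` supported outside the Fubini–Study ball `B_{[W]}(r/2)`:
`ψ̄_{r,W}(Z) = (φ_W(Θ_{t,W} Z) + 1)⁻¹ − 2/3` with `t = 1/tan(r/2)` if `φ_W(Z) ≤ cos²(r/2)`,
and `0` otherwise. -/
noncomputable def psibar {m : ℕ} (r : ℝ) (W Z : EuclideanSpace ℂ (Fin (m + 1))) : ℝ :=
  if phiW W Z ≤ (Real.cos (r / 2)) ^ 2 then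
    (phiW W (ThetaW (1 / Real.tan (r / 2)) W Z) + 1)⁻¹ - 2 / 3
  else 0

private lemma pyth {m : ℕ} {x y : EuclideanSpace ℂ (Fin (m + 1))}
    (h : (inner ℂ x y : ℂ) = 0) : ‖x + y‖ ^ 2 = ‖x‖ ^ 2 + ‖y‖ ^ 2 := by
  have := norm_add_sq_eq_norm_sq_add_norm_sq_of_inner_eq_zero x y h
  simpa [pow_two] using this

set_option maxHeartbeats 1000000 in
/-- For `r ∈ (0, π/2)`, the function `ψ̄_{r,W}` satisfies `0 ≤ ψ̄_{r,W} ≤ 1/3` on nonzero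
vectors, and vanishes whenever `φ_W(Z) > cos²(r/2)`; i.e. it is a nonnegative function
bounded by `1/3` supported in the complement of the Fubini–Study ball `B_{[W]}(r/2)`. -/
theorem psibar_bounds {m : ℕ} (W : EuclideanSpace ℂ (Fin (m + 1))) (hW : W ≠ 0)
    (r : ℝ) (hr : r ∈ Set.Ioo 0 (Real.pi / 2)) :
    (∀ Z : EuclideanSpace ℂ (Fin (m + 1)), Z ≠ 0 →
      0 ≤ psibar r W Z ∧ psibar r W Z ≤ 1 / 3) ∧
    (∀ Z : EuclideanSpace ℂ (Fin (m + 1)),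
      (Real.cos (r / 2)) ^ 2 < phiW W Z → psibar r W Z = 0) := by
  obtain ⟨hr0, hrpi⟩ := hr
  have hsin : 0 < Real.sin (r / 2) :=
    Real.sin_pos_of_pos_of_lt_pi (by linarith) (by linarith [Real.pi_pos])
  have hcos : 0 < Real.cos (r / 2) :=
    Real.cos_pos_of_mem_Ioo ⟨by linarith [Real.pi_pos], by linarith [Real.pi_pos]⟩
  have htan : Real.tan (r / 2) = Real.sin (r / 2) / Real.cos (r / 2) := Real.tan_eq_sin_div_cos _
  set t : ℝ := 1 / Real.tan (r / 2) with ht_def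
  have ht : t = Real.cos (r / 2) / Real.sin (r / 2) := by
    rw [ht_def, htan, one_div, inv_div]
  have htpos : 0 < t := by rw [ht]; positivity
  have hWn : (0:ℝ) < ‖W‖ := norm_pos_iff.mpr hW
  have hW2 : (0:ℝ) < ‖W‖ ^ 2 := by positivity
  constructor
  · intro Z hZ
    by_cases hcond : phiW W Z ≤ (Real.cos (r / 2)) ^ 2
    · rw [psibar, if_pos hcond]
      set c : ℂ := (inner ℂ W Z : ℂ) with hc
      set V : EuclideanSpace ℂ (Fin (m + 1)) := Z - (c / ((‖W‖ : ℂ) ^ 2)) • W with hV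
      have hWW : (inner ℂ W W : ℂ) = ((‖W‖ : ℂ)) ^ 2 := by
        rw [inner_self_eq_norm_sq_to_K]; norm_cast
      have hWC : ((‖W‖ : ℂ)) ^ 2 ≠ 0 := by
        simpa using pow_ne_zero 2 (Complex.ofReal_ne_zero.mpr hWn.ne')
      have hWV : (inner ℂ W V : ℂ) = 0 := by
        rw [hV, inner_sub_right, inner_smul_right, hWW, div_mul_cancel₀ _ hWC]
        simp [hc]
      have hZdec : Z = (c / ((‖W‖ : ℂ) ^ 2)) • W + V := by rw [hV]; abel
      have hnormsmul : ‖(c / ((‖W‖ : ℂ) ^ 2)) • W‖ ^ 2 = ‖c‖ ^ 2 / ‖W‖ ^ 2 := by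
        rw [norm_smul]
        simp only [norm_div, norm_pow, Complex.norm_real, Real.norm_eq_abs, abs_norm]
        rw [mul_pow, div_pow]
        field_simp
      have hinnerSV : (inner ℂ ((c / ((‖W‖ : ℂ) ^ 2)) • W) V : ℂ) = 0 := by
        rw [inner_smul_left, hWV, mul_zero]
      have hZ2 : ‖Z‖ ^ 2 = ‖c‖ ^ 2 / ‖W‖ ^ 2 + ‖V‖ ^ 2 := by
        rw [hZdec, pyth hinnerSV, hnormsmul]
      have hTdec : ThetaW t W Z = (c / ((‖W‖ : ℂ) ^ 2)) • W + ((t:ℝ):ℂ) • V := by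
        rw [ThetaW, hV, ← hc]
        rw [smul_sub, smul_smul]
        push_cast
        ring_nf
        module
      have hinnerST : (inner ℂ ((c / ((‖W‖ : ℂ) ^ 2)) • W) (((t:ℝ):ℂ) • V) : ℂ) = 0 := by
        rw [inner_smul_left, inner_smul_right, hWV]; ring
      have hT2 : ‖ThetaW t W Z‖ ^ 2 = ‖c‖ ^ 2 / ‖W‖ ^ 2 + t ^ 2 * ‖V‖ ^ 2 := by
        rw [hTdec, pyth hinnerST, hnormsmul, norm_smul]
        simp only [Complex.norm_real, Real.norm_eq_abs]
        rw [mul_pow, sq_abs]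
      have hTinner : (inner ℂ W (ThetaW t W Z) : ℂ) = c := by
        rw [hTdec, inner_add_right, inner_smul_right, inner_smul_right, hWV, hWW,
          div_mul_cancel₀ _ hWC, mul_zero, add_zero]
      have hkey : ‖c‖ ^ 2 ≤ t ^ 2 * ‖V‖ ^ 2 * ‖W‖ ^ 2 := by
        have hZn : (0:ℝ) < ‖Z‖ ^ 2 := pow_pos (norm_pos_iff.mpr hZ) 2
        have h1 : ‖c‖ ^ 2 ≤ (Real.cos (r / 2)) ^ 2 * (‖Z‖ ^ 2 * ‖W‖ ^ 2) := by
          have h := hcond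
          rw [phiW, div_le_iff₀ (by positivity)] at h
          exact h
        rw [hZ2] at h1
        have ht2 : t ^ 2 * Real.sin (r / 2) ^ 2 = Real.cos (r / 2) ^ 2 := by
          rw [ht, div_pow, div_mul_cancel₀]
          positivity
        have hsc : Real.sin (r / 2) ^ 2 + Real.cos (r / 2) ^ 2 = 1 := Real.sin_sq_add_cos_sq _
        have h2 : Real.sin (r / 2) ^ 2 * ‖c‖ ^ 2 ≤ Real.cos (r / 2) ^ 2 * (‖V‖ ^ 2 * ‖W‖ ^ 2) := by
          have hexp : (‖c‖ ^ 2 / ‖W‖ ^ 2 + ‖V‖ ^ 2) * ‖W‖ ^ 2 = ‖c‖ ^ 2 + ‖V‖ ^ 2 * ‖W‖ ^ 2 := by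
            field_simp
          rw [hexp] at h1
          nlinarith
        have h3 : Real.sin (r / 2) ^ 2 * ‖c‖ ^ 2
            ≤ Real.sin (r / 2) ^ 2 * (t ^ 2 * ‖V‖ ^ 2 * ‖W‖ ^ 2) := by
          calc Real.sin (r / 2) ^ 2 * ‖c‖ ^ 2
              ≤ Real.cos (r / 2) ^ 2 * (‖V‖ ^ 2 * ‖W‖ ^ 2) := h2
            _ = Real.sin (r / 2) ^ 2 * (t ^ 2 * ‖V‖ ^ 2 * ‖W‖ ^ 2) := by rw [← ht2]; ring
        exact le_of_mul_le_mul_left h3 (by positivity)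
      have hphiT0 : 0 ≤ phiW W (ThetaW t W Z) := by
        rw [phiW]; positivity
      have hphiT : phiW W (ThetaW t W Z) ≤ 1 / 2 := by
        rw [phiW, hTinner, hT2]
        have hden : (‖c‖ ^ 2 / ‖W‖ ^ 2 + t ^ 2 * ‖V‖ ^ 2) * ‖W‖ ^ 2
            = ‖c‖ ^ 2 + t ^ 2 * ‖V‖ ^ 2 * ‖W‖ ^ 2 := by field_simp
        rw [hden]
        rcases eq_or_lt_of_le (by positivity : (0:ℝ) ≤ ‖c‖ ^ 2 + t ^ 2 * ‖V‖ ^ 2 * ‖W‖ ^ 2)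
          with h0 | h0
        · rw [← h0, div_zero]; norm_num
        · rw [div_le_iff₀ h0]; nlinarith
      constructor
      · have h32 : phiW W (ThetaW t W Z) + 1 ≤ 3 / 2 := by linarith
        have hinv : ((3:ℝ)/2)⁻¹ ≤ (phiW W (ThetaW t W Z) + 1)⁻¹ :=
          inv_anti₀ (by linarith) h32
        norm_num at hinv
        linarith
      · have h11 : (1:ℝ) ≤ phiW W (ThetaW t W Z) + 1 := by linarith
        have hinv : (phiW W (ThetaW t W Z) + 1)⁻¹ ≤ (1:ℝ)⁻¹ :=
          inv_anti₀ one_pos h11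
        norm_num at hinv
        linarith
    · rw [psibar, if_neg hcond]; norm_num
  · intro Z h
    rw [psibar, if_neg (not_le.mpr h)]
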